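/- Let Z ~ ESN_k(0, Ω̄, α, τ) with density f(z) = φ_k(z; Ω̄)·Φ(α₀ + αᵀz)/Φ(τ), Ω̄ a full-rank correlation matrix, α₀ = τ√(1+αᵀΩ̄α). Then for any measurable h: ℝᵏ → ℝ for which the integrals exist, E[h(Z)·ζ₁(α₀ + αᵀZ)] = E[ζ₁(α₀ + αᵀZ)] · E[h(U)], where U ~ N_k(−τδ, Ω̄ − δδᵀ) with δ = Ω̄α/√(1+αᵀΩ̄α) and ζ₁(x) = φ(x)/Φ(x). -/

import Mathlib

/-!
Completing the square in `z`: with `s = √(1 + αᵀΩ̄α)` and `α₀ = τ s`,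
`φ_k(z; Ω̄) φ(α₀ + αᵀz) = φ(τ) / s · φ_k(z + τδ; Ω̄ - δδᵀ)`,
because `(Ω̄ - δδᵀ)⁻¹ = Ω̄⁻¹ + ααᵀ` (Sherman–Morrison) and `det (Ω̄ - δδᵀ) = det Ω̄ / s²`.
So `ζ₁(α₀ + αᵀz) f(z)` is the constant `φ(τ) / (s Φ(τ))` times the `N_k(-τδ, Ω̄ - δδᵀ)` density,
and that constant is `E[ζ₁(α₀ + αᵀZ)]`.
-/

open Matrix MeasureTheory Real

noncomputable def phi (x : ℝ) : ℝ := (Real.sqrt (2 * Real.pi))⁻¹ * Real.exp (-x ^ 2 / 2)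

noncomputable def Phi (x : ℝ) : ℝ := ∫ t in Set.Iic x, phi t

noncomputable def zeta1 (x : ℝ) : ℝ := phi x / Phi x

/-- Density of `N_k(0, Ω)`. -/
noncomputable def gaussPdf {k : ℕ} (Ω : Matrix (Fin k) (Fin k) ℝ) (z : Fin k → ℝ) : ℝ :=
  (2 * Real.pi) ^ (-(k : ℝ) / 2) * Ω.det ^ (-(1 : ℝ) / 2) *
    Real.exp (-(1 / 2) * (z ⬝ᵥ Ω⁻¹ *ᵥ z))

/-- Density of `ESN_k(0, Ω̄, α, τ)`. -/
noncomputable def esnPdf {k : ℕ} (Ωb : Matrix (Fin k) (Fin k) ℝ) (α : Fin k → ℝ) (τ : ℝ)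
    (z : Fin k → ℝ) : ℝ :=
  gaussPdf Ωb z * Phi (τ * Real.sqrt (1 + α ⬝ᵥ Ωb *ᵥ α) + α ⬝ᵥ z) / Phi τ

open ProbabilityTheory

lemma phi_eq_gaussianPDFReal : phi = gaussianPDFReal 0 1 := by
  ext x
  simp [phi, gaussianPDFReal, neg_div]

lemma integral_phi : ∫ x, phi x = 1 := by
  rw [phi_eq_gaussianPDFReal, integral_gaussianPDFReal_eq_one 0 one_ne_zero]

lemma Phi_pos (x : ℝ) : 0 < Phi x := by
  have hphi : ∀ t, 0 < phi t := by
    simp [phi_eq_gaussianPDFReal, gaussianPDFReal_pos]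
  rw [Phi, setIntegral_pos_iff_support_of_nonneg_ae (.of_forall fun t => (hphi t).le)
    (phi_eq_gaussianPDFReal ▸ integrable_gaussianPDFReal 0 1).integrableOn,
    Function.support_eq_univ fun t => (hphi t).ne', Set.univ_inter]
  simp

lemma gaussPdf_one {k : ℕ} (u : Fin k → ℝ) : gaussPdf 1 u = ∏ i, phi (u i) := by
  simp only [gaussPdf, phi, det_one, inv_one, one_mulVec, Finset.prod_mul_distrib,
    Finset.prod_const, Finset.card_univ, Fintype.card_fin, ← Real.exp_sum]
  rw [Real.sqrt_eq_rpow, ← Real.rpow_natCast, ← Real.rpow_neg_one, ← Real.rpow_mul (by positivity),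
    ← Real.rpow_mul (by positivity)]
  congr 2
  · rw [Real.one_rpow, mul_one]
    ring_nf
  · simp [dotProduct, Finset.mul_sum, sq, div_eq_inv_mul]

lemma integral_gaussPdf_one (k : ℕ) : ∫ u : Fin k → ℝ, gaussPdf 1 u = 1 := by
  simp_rw [gaussPdf_one, integral_fintype_prod_volume_eq_prod, integral_phi, Finset.prod_const_one]

lemma integral_comp_mulVec {ι : Type*} [Fintype ι] [DecidableEq ι] {A : Matrix ι ι ℝ}
    (hA : A.det ≠ 0) (f : (ι → ℝ) → ℝ) :
    ∫ x, f (A *ᵥ x) = |A.det|⁻¹ * ∫ y, f y := by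
  have hemb : MeasurableEmbedding (toLin' A) :=
    ((toLin' A).isClosedEmbedding_of_injective (LinearMap.ker_eq_bot.2
      (mulVec_injective_iff_isUnit.2 ((isUnit_iff_isUnit_det A).2 hA.isUnit)))).measurableEmbedding
  rw [show (fun x => f (A *ᵥ x)) = fun x => f (toLin' A x) from rfl, ← hemb.integral_map,
    Real.map_linearMap_volume_pi_eq_smul_volume_pi (by rwa [LinearMap.det_toLin']),
    integral_smul_measure, LinearMap.det_toLin', ENNReal.toReal_ofReal (abs_nonneg _), abs_inv,
    smul_eq_mul]

lemma gaussPdf_mul_transpose_mulVec {k : ℕ} {B : Matrix (Fin k) (Fin k) ℝ} (hB : B.det ≠ 0)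
    (u : Fin k → ℝ) : gaussPdf (B * Bᵀ) (B *ᵥ u) = |B.det|⁻¹ * gaussPdf 1 u := by
  have hBu : IsUnit B.det := hB.isUnit
  have hquad : B *ᵥ u ⬝ᵥ (B * Bᵀ)⁻¹ *ᵥ (B *ᵥ u) = u ⬝ᵥ u := by
    rw [Matrix.mul_inv_rev, mulVec_mulVec, Matrix.mul_assoc, nonsing_inv_mul _ hBu,
      Matrix.mul_one, dotProduct_comm, dotProduct_mulVec, ← mulVec_transpose, mulVec_mulVec,
      mul_nonsing_inv _ (by rwa [det_transpose]), one_mulVec]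
  have hdet : (B * Bᵀ).det ^ (-(1 : ℝ) / 2) = |B.det|⁻¹ := by
    rw [det_mul, det_transpose, neg_div, Real.rpow_neg (mul_self_nonneg _), ← Real.sqrt_eq_rpow,
      Real.sqrt_mul_self_eq_abs]
  simp only [gaussPdf, hquad, hdet, det_one, inv_one, one_mulVec, Real.one_rpow]
  ring

open scoped MatrixOrder in
lemma integral_gaussPdf {k : ℕ} {S : Matrix (Fin k) (Fin k) ℝ} (hS : S.PosDef) :
    ∫ z, gaussPdf S z = 1 := by
  obtain ⟨B, hSB⟩ : ∃ B : Matrix (Fin k) (Fin k) ℝ, S = B * Bᵀ := by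
    obtain ⟨C, rfl⟩ := CStarAlgebra.nonneg_iff_eq_star_mul_self.mp hS.posSemidef.nonneg
    exact ⟨Cᵀ, by simp [star_eq_conjTranspose]⟩
  have hB : B.det ≠ 0 := by
    have := hS.det_pos
    rw [hSB, det_mul, det_transpose] at this
    exact left_ne_zero_of_mul this.ne'
  have hchange := integral_comp_mulVec hB (gaussPdf S)
  simp only [hSB, gaussPdf_mul_transpose_mulVec hB, integral_const_mul, integral_gaussPdf_one,
    mul_one] at hchange
  rw [hSB]
  exact (mul_eq_left₀ (by positivity)).1 hchange.symm

section ESNDelta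

variable {n : Type*} [Fintype n] {Ω : Matrix n n ℝ}

noncomputable def esnDelta (Ω : Matrix n n ℝ) (α : n → ℝ) : n → ℝ :=
  (√(1 + α ⬝ᵥ Ω *ᵥ α))⁻¹ • (Ω *ᵥ α)

lemma Matrix.PosDef.one_add_dotProduct_mulVec_pos (hΩ : Ω.PosDef) (α : n → ℝ) :
    0 < 1 + α ⬝ᵥ Ω *ᵥ α := by
  have := hΩ.posSemidef.dotProduct_mulVec_nonneg α
  simp only [star_trivial] at this
  linarith

lemma dotProduct_esnDelta (α : n → ℝ) :
    α ⬝ᵥ esnDelta Ω α = (√(1 + α ⬝ᵥ Ω *ᵥ α))⁻¹ * (α ⬝ᵥ Ω *ᵥ α) := by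
  rw [esnDelta, dotProduct_smul, smul_eq_mul]

variable [DecidableEq n]

lemma inv_mulVec_esnDelta (hΩ : Ω.PosDef) (α : n → ℝ) :
    Ω⁻¹ *ᵥ esnDelta Ω α = (√(1 + α ⬝ᵥ Ω *ᵥ α))⁻¹ • α := by
  rw [esnDelta, mulVec_smul, mulVec_mulVec, nonsing_inv_mul _ hΩ.det_pos.ne'.isUnit, one_mulVec]

lemma esnDelta_vecMul_inv (hΩ : Ω.PosDef) (α : n → ℝ) :
    esnDelta Ω α ᵥ* Ω⁻¹ = (√(1 + α ⬝ᵥ Ω *ᵥ α))⁻¹ • α := by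
  rw [← mulVec_transpose, transpose_nonsing_inv, (isHermitian_iff_isSymm.1 hΩ.isHermitian).eq,
    inv_mulVec_esnDelta hΩ]

lemma sub_vecMulVec_esnDelta_mul (hΩ : Ω.PosDef) (α : n → ℝ) :
    (Ω - vecMulVec (esnDelta Ω α) (esnDelta Ω α)) * (Ω⁻¹ + vecMulVec α α) = 1 := by
  have hcoef : (√(1 + α ⬝ᵥ Ω *ᵥ α))⁻¹ * (√(1 + α ⬝ᵥ Ω *ᵥ α))⁻¹ +
      (√(1 + α ⬝ᵥ Ω *ᵥ α))⁻¹ * (α ⬝ᵥ Ω *ᵥ α) * (√(1 + α ⬝ᵥ Ω *ᵥ α))⁻¹ = 1 := by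
    have hq := hΩ.one_add_dotProduct_mulVec_pos α
    have := Real.sq_sqrt hq.le
    have := (Real.sqrt_pos.2 hq).ne'
    field_simp
    linarith
  rw [Matrix.sub_mul, Matrix.mul_add, Matrix.mul_add, mul_nonsing_inv _ hΩ.det_pos.ne'.isUnit,
    mul_vecMulVec, vecMulVec_mul, esnDelta_vecMul_inv hΩ, vecMulVec_mul_vecMulVec,
    dotProduct_comm (esnDelta Ω α), dotProduct_esnDelta, vecMulVec_smul, vecMulVec_smul,
    esnDelta, smul_vecMulVec, smul_smul, smul_smul, ← add_smul, hcoef, one_smul,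
    add_sub_cancel_right]

lemma inv_sub_vecMulVec_esnDelta (hΩ : Ω.PosDef) (α : n → ℝ) :
    (Ω - vecMulVec (esnDelta Ω α) (esnDelta Ω α))⁻¹ = Ω⁻¹ + vecMulVec α α :=
  inv_eq_right_inv (sub_vecMulVec_esnDelta_mul hΩ α)

lemma posDef_sub_vecMulVec_esnDelta (hΩ : Ω.PosDef) (α : n → ℝ) :
    (Ω - vecMulVec (esnDelta Ω α) (esnDelta Ω α)).PosDef := by
  rw [← inv_eq_left_inv (sub_vecMulVec_esnDelta_mul hΩ α)]
  exact (hΩ.inv.add_posSemidef (by simpa using posSemidef_vecMulVec_self_star α)).inv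

lemma det_sub_vecMulVec_esnDelta (hΩ : Ω.PosDef) (α : n → ℝ) :
    (Ω - vecMulVec (esnDelta Ω α) (esnDelta Ω α)).det = Ω.det / (1 + α ⬝ᵥ Ω *ᵥ α) := by
  have hinv : Ω⁻¹ + vecMulVec α α = Ω⁻¹ * (1 + vecMulVec (Ω *ᵥ α) α) := by
    rw [Matrix.mul_add, Matrix.mul_one, mul_vecMulVec, mulVec_mulVec,
      nonsing_inv_mul _ hΩ.det_pos.ne'.isUnit, one_mulVec]
  have hdet := congrArg det (sub_vecMulVec_esnDelta_mul hΩ α)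
  have hdet_one_add : (1 + vecMulVec (Ω *ᵥ α) α).det = 1 + α ⬝ᵥ Ω *ᵥ α := by
    rw [vecMulVec_eq Unit, det_one_add_replicateCol_mul_replicateRow, dotProduct_comm]
  rw [det_mul, hinv, det_mul, det_nonsing_inv, hdet_one_add, det_one, Ring.inverse_eq_inv'] at hdet
  have := hΩ.det_pos.ne'
  have := (hΩ.one_add_dotProduct_mulVec_pos α).ne'
  field_simp at hdet ⊢
  linarith

lemma shift_esnDelta_dotProduct_mulVec (hΩ : Ω.PosDef) (α z : n → ℝ) (τ : ℝ) :
    (z + τ • esnDelta Ω α) ⬝ᵥ (Ω⁻¹ + vecMulVec α α) *ᵥ (z + τ • esnDelta Ω α) =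
      z ⬝ᵥ Ω⁻¹ *ᵥ z + (τ * √(1 + α ⬝ᵥ Ω *ᵥ α) + α ⬝ᵥ z) ^ 2 - τ ^ 2 := by
  have hδz : esnDelta Ω α ⬝ᵥ Ω⁻¹ *ᵥ z = (√(1 + α ⬝ᵥ Ω *ᵥ α))⁻¹ * (α ⬝ᵥ z) := by
    rw [dotProduct_mulVec, esnDelta_vecMul_inv hΩ, smul_dotProduct, smul_eq_mul]
  simp only [add_mulVec, vecMulVec_mulVec, op_smul_eq_smul, mulVec_add, mulVec_smul,
    dotProduct_add, add_dotProduct, dotProduct_smul, smul_dotProduct, smul_eq_mul,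
    inv_mulVec_esnDelta hΩ, hδz, dotProduct_esnDelta, dotProduct_comm z α,
    dotProduct_comm (esnDelta Ω α) α]
  have hq := hΩ.one_add_dotProduct_mulVec_pos α
  have hs0 := (Real.sqrt_pos.2 hq).ne'
  have hs2 := Real.sq_sqrt hq.le
  generalize √(1 + α ⬝ᵥ Ω *ᵥ α) = s at *
  rw [show α ⬝ᵥ Ω *ᵥ α = s ^ 2 - 1 by linarith]
  field_simp
  ring

end ESNDelta

lemma gaussPdf_mul_phi {k : ℕ} {Ω : Matrix (Fin k) (Fin k) ℝ} (hΩ : Ω.PosDef) (α : Fin k → ℝ)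
    (τ : ℝ) (z : Fin k → ℝ) :
    gaussPdf Ω z * phi (τ * √(1 + α ⬝ᵥ Ω *ᵥ α) + α ⬝ᵥ z) =
      phi τ / √(1 + α ⬝ᵥ Ω *ᵥ α) *
        gaussPdf (Ω - vecMulVec (esnDelta Ω α) (esnDelta Ω α)) (z + τ • esnDelta Ω α) := by
  have hq := hΩ.one_add_dotProduct_mulVec_pos α
  have hdet : (Ω.det / (1 + α ⬝ᵥ Ω *ᵥ α)) ^ (-(1 : ℝ) / 2) =
      Ω.det ^ (-(1 : ℝ) / 2) * √(1 + α ⬝ᵥ Ω *ᵥ α) := by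
    rw [Real.div_rpow hΩ.det_pos.le hq.le, Real.sqrt_eq_rpow, div_eq_mul_inv,
      ← Real.rpow_neg hq.le]
    norm_num
  have hs0 := (Real.sqrt_pos.2 hq).ne'
  rw [gaussPdf, gaussPdf, inv_sub_vecMulVec_esnDelta hΩ, det_sub_vecMulVec_esnDelta hΩ, hdet,
    shift_esnDelta_dotProduct_mulVec hΩ, phi, phi]
  generalize √(1 + α ⬝ᵥ Ω *ᵥ α) = s at *
  have hexp : rexp (-(1 / 2) * (z ⬝ᵥ Ω⁻¹ *ᵥ z + (τ * s + α ⬝ᵥ z) ^ 2 - τ ^ 2)) =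
      rexp (-(1 / 2) * (z ⬝ᵥ Ω⁻¹ *ᵥ z)) * rexp (-(τ * s + α ⬝ᵥ z) ^ 2 / 2) / rexp (-τ ^ 2 / 2) := by
    rw [← Real.exp_add, ← Real.exp_sub]
    ring_nf
  rw [hexp]
  field_simp

lemma zeta1_mul_esnPdf {k : ℕ} {Ω : Matrix (Fin k) (Fin k) ℝ} (hΩ : Ω.PosDef) (α : Fin k → ℝ)
    (τ : ℝ) (z : Fin k → ℝ) :
    zeta1 (τ * √(1 + α ⬝ᵥ Ω *ᵥ α) + α ⬝ᵥ z) * esnPdf Ω α τ z =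
      phi τ / (√(1 + α ⬝ᵥ Ω *ᵥ α) * Phi τ) *
        gaussPdf (Ω - vecMulVec (esnDelta Ω α) (esnDelta Ω α)) (z + τ • esnDelta Ω α) := by
  calc zeta1 (τ * √(1 + α ⬝ᵥ Ω *ᵥ α) + α ⬝ᵥ z) * esnPdf Ω α τ z
      = gaussPdf Ω z * phi (τ * √(1 + α ⬝ᵥ Ω *ᵥ α) + α ⬝ᵥ z) / Phi τ := by
        have := (Phi_pos (τ * √(1 + α ⬝ᵥ Ω *ᵥ α) + α ⬝ᵥ z)).ne'
        rw [zeta1, esnPdf]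
        field_simp
    _ = _ := by
        rw [gaussPdf_mul_phi hΩ]
        ring

lemma integral_zeta1_mul_esnPdf {k : ℕ} {Ω : Matrix (Fin k) (Fin k) ℝ} (hΩ : Ω.PosDef)
    (α : Fin k → ℝ) (τ : ℝ) :
    ∫ z, zeta1 (τ * √(1 + α ⬝ᵥ Ω *ᵥ α) + α ⬝ᵥ z) * esnPdf Ω α τ z =
      phi τ / (√(1 + α ⬝ᵥ Ω *ᵥ α) * Phi τ) := by
  simp_rw [zeta1_mul_esnPdf hΩ, integral_const_mul,
    integral_add_right_eq_self (gaussPdf (Ω - vecMulVec (esnDelta Ω α) (esnDelta Ω α))),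
    integral_gaussPdf (posDef_sub_vecMulVec_esnDelta hΩ α), mul_one]

theorem esn_expectation_factorization_general {k : ℕ} (Ωb : Matrix (Fin k) (Fin k) ℝ)
    (hΩ : Ωb.PosDef) (α : Fin k → ℝ) (τ : ℝ)
    (h : (Fin k → ℝ) → ℝ)
    (δ : Fin k → ℝ) (hδ : δ = (Real.sqrt (1 + α ⬝ᵥ Ωb *ᵥ α))⁻¹ • (Ωb *ᵥ α)) :
    ∫ z : Fin k → ℝ,
        h z * zeta1 (τ * Real.sqrt (1 + α ⬝ᵥ Ωb *ᵥ α) + α ⬝ᵥ z) * esnPdf Ωb α τ z =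
      (∫ z : Fin k → ℝ,
        zeta1 (τ * Real.sqrt (1 + α ⬝ᵥ Ωb *ᵥ α) + α ⬝ᵥ z) * esnPdf Ωb α τ z) *
      ∫ u : Fin k → ℝ, h u * gaussPdf (Ωb - vecMulVec δ δ) (u + τ • δ) := by
  obtain rfl : δ = esnDelta Ωb α := hδ
  rw [integral_zeta1_mul_esnPdf hΩ, ← integral_const_mul]
  refine integral_congr_ae (.of_forall fun z => ?_)
  simp only [mul_assoc, zeta1_mul_esnPdf hΩ]
  ring

theorem esn_expectation_factorization {k : ℕ} (Ωb : Matrix (Fin k) (Fin k) ℝ)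
    (hΩ : Ωb.PosDef) (hdiag : ∀ i, Ωb i i = 1) (α : Fin k → ℝ) (τ : ℝ)
    (h : (Fin k → ℝ) → ℝ) (hmeas : Measurable h)
    (δ : Fin k → ℝ) (hδ : δ = (Real.sqrt (1 + α ⬝ᵥ Ωb *ᵥ α))⁻¹ • (Ωb *ᵥ α))
    (hint1 : Integrable (fun z : Fin k → ℝ =>
      h z * zeta1 (τ * Real.sqrt (1 + α ⬝ᵥ Ωb *ᵥ α) + α ⬝ᵥ z) * esnPdf Ωb α τ z))
    (hint2 : Integrable (fun u : Fin k → ℝ =>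
      h u * gaussPdf (Ωb - vecMulVec δ δ) (u + τ • δ))) :
    ∫ z : Fin k → ℝ,
        h z * zeta1 (τ * Real.sqrt (1 + α ⬝ᵥ Ωb *ᵥ α) + α ⬝ᵥ z) * esnPdf Ωb α τ z =
      (∫ z : Fin k → ℝ,
        zeta1 (τ * Real.sqrt (1 + α ⬝ᵥ Ωb *ᵥ α) + α ⬝ᵥ z) * esnPdf Ωb α τ z) *
      ∫ u : Fin k → ℝ, h u * gaussPdf (Ωb - vecMulVec δ δ) (u + τ • δ) :=
  esn_expectation_factorization_general Ωb hΩ α τ h δ hδ
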